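/- arXiv:1406.3898 — 5 statements merged into one kernel-verified Lean document; each statement's English description precedes it below -/
import Mathlib

section
/- For any Hermitian matrix h that is positive semidefinite and any matrix O (over the complex numbers, of the same finite dimension), the operator norm of the commutator [h, O] satisfies ‖h*O - O*h‖ ≤ ‖h‖ * ‖O‖. -/
/-!
Shifting `a` by a scalar does not change the commutator `a * b - b * a`. For `0 ≤ a` the spectrum
of `a` lies in `[0, ‖a‖]`, so that of `a - ‖a‖ / 2` lies in `[-‖a‖ / 2, ‖a‖ / 2]`, and the
continuous functional calculus gives `‖a - ‖a‖ / 2‖ ≤ ‖a‖ / 2`. Hence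
`‖a * b - b * a‖ ≤ 2 ‖a - ‖a‖ / 2‖ ‖b‖ ≤ ‖a‖ ‖b‖`.
-/

open scoped Matrix.Norms.L2Operator ComplexOrder

theorem commutator_eq_commutator_sub_algebraMap {R A : Type*} [CommSemiring R] [Ring A]
    [Algebra R A] (a b : A) (c : R) :
    a * b - b * a = (a - algebraMap R A c) * b - b * (a - algebraMap R A c) := by
  rw [sub_mul, mul_sub, Algebra.commutes c b]
  abel

theorem norm_commutator_le_two_mul_norm_sub_algebraMap {R A : Type*} [CommSemiring R]
    [NormedRing A] [Algebra R A] (a b : A) (c : R) :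
    ‖a * b - b * a‖ ≤ 2 * ‖a - algebraMap R A c‖ * ‖b‖ := by
  set a' := a - algebraMap R A c
  calc ‖a * b - b * a‖ = ‖a' * b - b * a'‖ := by
        rw [commutator_eq_commutator_sub_algebraMap a b c]
    _ ≤ ‖a' * b‖ + ‖b * a'‖ := norm_sub_le _ _
    _ ≤ ‖a'‖ * ‖b‖ + ‖b‖ * ‖a'‖ := add_le_add (norm_mul_le _ _) (norm_mul_le _ _)
    _ = 2 * ‖a'‖ * ‖b‖ := by ring

namespace CStarAlgebra

variable {A : Type*} [CStarAlgebra A] [PartialOrder A] [StarOrderedRing A]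

theorem norm_sub_algebraMap_half_norm_le {a : A} (ha : 0 ≤ a) :
    ‖a - algebraMap ℝ A (‖a‖ / 2)‖ ≤ ‖a‖ / 2 := by
  nontriviality A
  have hsa : IsSelfAdjoint a := .of_nonneg ha
  have hcfc : a - algebraMap ℝ A (‖a‖ / 2) = cfc (fun t : ℝ => t - ‖a‖ / 2) a := by
    rw [cfc_sub .., cfc_id' .., cfc_const ..]
  rw [hcfc]
  refine norm_cfc_le (by positivity) fun t ht => ?_
  have h0 : 0 ≤ t := spectrum_nonneg_of_nonneg ha ht
  have h1 : t ≤ ‖a‖ := (Real.le_norm_self t).trans (spectrum.norm_le_norm_of_mem ht)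
  rw [Real.norm_eq_abs, abs_le]
  constructor <;> linarith

theorem norm_commutator_le_of_nonneg {a : A} (ha : 0 ≤ a) (b : A) :
    ‖a * b - b * a‖ ≤ ‖a‖ * ‖b‖ :=
  calc ‖a * b - b * a‖ ≤ 2 * ‖a - algebraMap ℝ A (‖a‖ / 2)‖ * ‖b‖ :=
        norm_commutator_le_two_mul_norm_sub_algebraMap a b _
    _ ≤ 2 * (‖a‖ / 2) * ‖b‖ := by gcongr; exact norm_sub_algebraMap_half_norm_le ha
    _ = ‖a‖ * ‖b‖ := by ring

end CStarAlgebra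

/-- For any Hermitian positive semidefinite matrix `h` and any matrix `O`,
the operator norm of the commutator satisfies `‖h*O - O*h‖ ≤ ‖h‖ * ‖O‖`. -/
theorem commutator_norm_le {n : ℕ} (h O : Matrix (Fin n) (Fin n) ℂ)
    (hh : h.PosSemidef) :
    ‖h * O - O * h‖ ≤ ‖h‖ * ‖O‖ := by
  open scoped MatrixOrder in
  exact CStarAlgebra.norm_commutator_le_of_nonneg hh.nonneg O
end

section
/- Let H be a Hermitian matrix and let Π₁ be the spectral projection of H onto eigenvalues ≥ ε′ and Π₂ the spectral projection onto eigenvalues ≤ ε. Then for any matrix A and any s ≥ 0, ‖Π₁ A Π₂‖ ≤ e^{-s(ε′-ε)} · ‖e^{sH} A e^{-sH}‖. -/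
/-!
Both spectral projections are functions of `H`, so they commute with `e^{±sH}`, and
`Π₁ A Π₂ = (Π₁ e^{-sH}) (e^{sH} A e^{-sH}) (e^{sH} Π₂)`. By the functional calculus,
`‖Π₁ e^{-sH}‖ = sup_{λ ≥ ε′} e^{-sλ} ≤ e^{-sε′}` and `‖e^{sH} Π₂‖ = sup_{λ ≤ ε} e^{sλ} ≤ e^{sε}`
for `s ≥ 0`. This works for any self-adjoint element of a C⋆-algebra whose spectral indicator
functions are continuous on the spectrum, which is automatic for matrices.
-/

open scoped Matrix.Norms.L2Operator Classical ComplexOrder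

/-- The spectral projection of a Hermitian matrix `H` onto the span of
eigenvectors whose eigenvalues lie in the set `S`. -/
noncomputable def spectralProj {n : ℕ} {H : Matrix (Fin n) (Fin n) ℂ}
    (hH : H.IsHermitian) (S : Set ℝ) : Matrix (Fin n) (Fin n) ℂ :=
  (hH.eigenvectorUnitary : Matrix (Fin n) (Fin n) ℂ) *
    (Matrix.diagonal fun i => if hH.eigenvalues i ∈ S then (1 : ℂ) else 0) *
    star (hH.eigenvectorUnitary : Matrix (Fin n) (Fin n) ℂ)

/-- The eigenvalues of a Hermitian matrix listed in increasing order (with multiplicity). -/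
noncomputable def sortedEig {n : ℕ} {H : Matrix (Fin n) (Fin n) ℂ}
    (hH : H.IsHermitian) : Fin n → ℝ :=
  hH.eigenvalues ∘ Tuple.sort hH.eigenvalues

open Set

theorem norm_mul_mul_le_of_mul_eq_one {R : Type*} [NormedRing R] {u v : R} (huv : u * v = 1)
    (p b q : R) : ‖p * b * q‖ ≤ ‖p * u‖ * ‖v * b * u‖ * ‖v * q‖ := by
  have hcancel (x : R) : u * (v * x) = x := by rw [← mul_assoc, huv, one_mul]
  calc ‖p * b * q‖ = ‖p * u * (v * b * u) * (v * q)‖ := by simp only [mul_assoc, hcancel]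
    _ ≤ ‖p * u‖ * ‖v * b * u‖ * ‖v * q‖ := norm_mul₃_le

namespace IsSelfAdjoint

variable {A : Type*} [CStarAlgebra A] {a : A}

theorem exp_smul_eq_cfc (ha : IsSelfAdjoint a) (t : ℝ) :
    NormedSpace.exp (t • a) = cfc (fun x => Real.exp (t * x)) a := by
  rw [← CFC.real_exp_eq_normedSpace_exp, ← cfc_comp_smul t Real.exp a]
  rfl

theorem norm_cfc_mul_exp_smul_le (ha : IsSelfAdjoint a) {f : ℝ → ℝ}
    (hf : ContinuousOn f (spectrum ℝ a)) {t c : ℝ} (hc : 0 ≤ c)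
    (h : ∀ x ∈ spectrum ℝ a, |f x| * Real.exp (t * x) ≤ c) :
    ‖cfc f a * NormedSpace.exp (t • a)‖ ≤ c := by
  rw [ha.exp_smul_eq_cfc, ← cfc_mul ..]
  refine norm_cfc_le hc fun x hx => ?_
  simpa [abs_mul] using h x hx

theorem norm_cfc_indicator_Ici_mul_exp_le (ha : IsSelfAdjoint a) {ε s : ℝ} (hs : 0 ≤ s)
    (hf : ContinuousOn ((Ici ε).indicator (1 : ℝ → ℝ)) (spectrum ℝ a)) :
    ‖cfc ((Ici ε).indicator (1 : ℝ → ℝ)) a * NormedSpace.exp ((-s) • a)‖ ≤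
      Real.exp (-s * ε) := by
  refine ha.norm_cfc_mul_exp_smul_le hf (Real.exp_nonneg _) fun x _ => ?_
  by_cases hx : x ∈ Ici ε
  · simpa [hx] using mul_le_mul_of_nonpos_left (mem_Ici.mp hx) (neg_nonpos.mpr hs)
  · simp [hx, Real.exp_nonneg]

theorem norm_exp_mul_cfc_indicator_Iic_le (ha : IsSelfAdjoint a) {ε s : ℝ} (hs : 0 ≤ s)
    (hf : ContinuousOn ((Iic ε).indicator (1 : ℝ → ℝ)) (spectrum ℝ a)) :
    ‖NormedSpace.exp (s • a) * cfc ((Iic ε).indicator (1 : ℝ → ℝ)) a‖ ≤ Real.exp (s * ε) := by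
  rw [ha.exp_smul_eq_cfc, (cfc_commute_cfc _ _ a).eq, ← ha.exp_smul_eq_cfc]
  refine ha.norm_cfc_mul_exp_smul_le hf (Real.exp_nonneg _) fun x _ => ?_
  by_cases hx : x ∈ Iic ε
  · simpa [hx] using mul_le_mul_of_nonneg_left (mem_Iic.mp hx) hs
  · simp [hx, Real.exp_nonneg]

theorem norm_cfc_indicator_mul_mul_le (ha : IsSelfAdjoint a) {ε ε' s : ℝ} (hs : 0 ≤ s)
    (hf₁ : ContinuousOn ((Ici ε').indicator (1 : ℝ → ℝ)) (spectrum ℝ a))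
    (hf₂ : ContinuousOn ((Iic ε).indicator (1 : ℝ → ℝ)) (spectrum ℝ a)) (b : A) :
    ‖cfc ((Ici ε').indicator (1 : ℝ → ℝ)) a * b * cfc ((Iic ε).indicator (1 : ℝ → ℝ)) a‖ ≤
      Real.exp (-s * (ε' - ε)) *
        ‖NormedSpace.exp (s • a) * b * NormedSpace.exp ((-s) • a)‖ := by
  have hinv : NormedSpace.exp ((-s) • a) * NormedSpace.exp (s • a) = 1 := by
    rw [ha.exp_smul_eq_cfc, ha.exp_smul_eq_cfc, ← cfc_mul .., ← cfc_one ℝ a]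
    exact cfc_congr fun x _ => by
      rw [← Real.exp_add, neg_mul, neg_add_cancel, Real.exp_zero, Pi.one_apply]
  calc _ ≤ ‖cfc ((Ici ε').indicator (1 : ℝ → ℝ)) a * NormedSpace.exp ((-s) • a)‖ *
        ‖NormedSpace.exp (s • a) * b * NormedSpace.exp ((-s) • a)‖ *
        ‖NormedSpace.exp (s • a) * cfc ((Iic ε).indicator (1 : ℝ → ℝ)) a‖ :=
      norm_mul_mul_le_of_mul_eq_one hinv _ b _
    _ ≤ Real.exp (-s * ε') * ‖NormedSpace.exp (s • a) * b * NormedSpace.exp ((-s) • a)‖ *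
        Real.exp (s * ε) := by
      gcongr
      · exact ha.norm_cfc_indicator_Ici_mul_exp_le hs hf₁
      · exact ha.norm_exp_mul_cfc_indicator_Iic_le hs hf₂
    _ = _ := by rw [mul_right_comm, ← Real.exp_add]; ring_nf

end IsSelfAdjoint

theorem spectralProj_eq_cfc {n : ℕ} {H : Matrix (Fin n) (Fin n) ℂ} (hH : H.IsHermitian)
    (S : Set ℝ) : spectralProj hH S = cfc (S.indicator (1 : ℝ → ℝ)) H := by
  rw [hH.cfc_eq, Matrix.IsHermitian.cfc, Unitary.conjStarAlgAut_apply, spectralProj]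
  congr 3
  ext i
  by_cases hi : hH.eigenvalues i ∈ S <;> simp [hi]

theorem proj_sandwich_bound_general {n : ℕ} {H : Matrix (Fin n) (Fin n) ℂ} (hH : H.IsHermitian)
    (A : Matrix (Fin n) (Fin n) ℂ) (ε ε' s : ℝ) (hs : 0 ≤ s) :
    ‖spectralProj hH (Set.Ici ε') * A * spectralProj hH (Set.Iic ε)‖ ≤
      Real.exp (-s * (ε' - ε)) *
        ‖NormedSpace.exp (s • H) * A * NormedSpace.exp ((-s) • H)‖ := by
  have hfin := H.finite_real_spectrum
  rw [spectralProj_eq_cfc, spectralProj_eq_cfc]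
  exact IsSelfAdjoint.norm_cfc_indicator_mul_mul_le hH.isSelfAdjoint hs
    (hfin.continuousOn _) (hfin.continuousOn _) A

/-- `‖Π₁ A Π₂‖ ≤ e^{-s(ε′-ε)} ‖e^{sH} A e^{-sH}‖` where `Π₁`, `Π₂` are the spectral
projections of the Hermitian matrix `H` onto eigenvalues `≥ ε′` and `≤ ε`. -/
theorem proj_sandwich_bound {n : ℕ} {H : Matrix (Fin n) (Fin n) ℂ} (hH : H.IsHermitian)
    (A : Matrix (Fin n) (Fin n) ℂ) (ε ε' s : ℝ) (hε : ε < ε') (hs : 0 ≤ s) :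
    ‖spectralProj hH (Set.Ici ε') * A * spectralProj hH (Set.Iic ε)‖ ≤
      Real.exp (-s * (ε' - ε)) *
        ‖NormedSpace.exp (s • H) * A * NormedSpace.exp ((-s) • H)‖ :=
  proj_sandwich_bound_general hH A ε ε' s hs
end

section
/- Let X and Y be n×n complex matrices and t ≥ 0. Define Y(s) = e^{sX} Y e^{-sX}, and G_j(t) = ∫_0^t ds₁ ∫_0^{s₁} ds₂ ⋯ ∫_0^{s_{j-1}} ds_j Y(s_j)⋯Y(s₂)Y(s₁) with G₀(t) = I. Then e^{t(X+Y)} = ∑_{j=0}^∞ G_j(t) e^{tX}, where the series converges absolutely in operator norm. -/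
open scoped Matrix.Norms.L2Operator

/-- The interaction-picture operator `Y(s) = e^{sX} Y e^{-sX}`. -/
noncomputable def dysonY {n : ℕ} (X Y : Matrix (Fin n) (Fin n) ℂ) (s : ℝ) :
    Matrix (Fin n) (Fin n) ℂ :=
  NormedSpace.exp (s • X) * Y * NormedSpace.exp ((-s) • X)

/-- The `j`-th Dyson term
`G_j(t) = ∫_0^t ds₁ ∫_0^{s₁} ds₂ ⋯ ∫_0^{s_{j-1}} ds_j  Y(s_j)⋯Y(s₂)Y(s₁)`,
with `G_0(t) = 1`, given by the recursion `G_{j+1}(t) = ∫_0^t G_j(s) Y(s) ds`. -/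
noncomputable def dysonG {n : ℕ} (X Y : Matrix (Fin n) (Fin n) ℂ) :
    ℕ → ℝ → Matrix (Fin n) (Fin n) ℂ
  | 0, _ => 1
  | (j + 1), t => ∫ s in (0 : ℝ)..t, dysonG X Y j s * dysonY X Y s

/-! The interaction-picture propagator `A(s) = e^{s(X+Y)} e^{-sX}` satisfies `A' = A · Y(s)`,
i.e. `A(u) = 1 + ∫₀ᵘ A(s) Y(s) ds`, while the partial sums `S_N = ∑_{j<N} G_j` satisfy
`S_{N+1}(u) = 1 + ∫₀ᵘ S_N(s) Y(s) ds`. So the errors `A - S_N`, like the `G_j` themselves, are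
iterated integrals against `Y` and obey the Picard bound `C (M u)^N / N!` with `M = sup ‖Y‖`.
Hence `S_N(t) → A(t)`, the series converges absolutely, and multiplying by `e^{tX}` on the right
gives the expansion. -/

open NormedSpace Set Filter Topology Finset
open scoped Nat

section IteratedIntegral

variable {E : Type*} [NormedRing E] [NormedSpace ℝ E]

theorem norm_integral_mul_le_pow_div_factorial {f g : ℝ → E} {C M t u : ℝ} {j : ℕ}
    (hf : ∀ s ∈ Icc 0 t, ‖f s‖ ≤ C * ((M * s) ^ j / j !))
    (hg : ∀ s ∈ Icc 0 t, ‖g s‖ ≤ M) (hu : u ∈ Icc 0 t) :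
    ‖∫ s in 0..u, f s * g s‖ ≤ C * ((M * u) ^ (j + 1) / (j + 1)!) := by
  have hbound :
      ∫ s in 0..u, C * ((M * s) ^ j / j !) * M = C * ((M * u) ^ (j + 1) / (j + 1)!) := by
    simp_rw [mul_pow, show ∀ s : ℝ,
      C * (M ^ j * s ^ j / j !) * M = C * M ^ (j + 1) / j ! * s ^ j from fun s => by ring]
    rw [intervalIntegral.integral_const_mul, integral_pow, zero_pow j.succ_ne_zero, sub_zero,
      Nat.factorial_succ]
    push_cast
    field_simp
  rw [← hbound]
  refine intervalIntegral.norm_integral_le_of_norm_le hu.1 (.of_forall fun s hs => ?_)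
    (Continuous.intervalIntegrable (by fun_prop) _ _)
  have hs' : s ∈ Icc 0 t := ⟨hs.1.le, hs.2.trans hu.2⟩
  exact (norm_mul_le _ _).trans
    (mul_le_mul (hf s hs') (hg s hs') (norm_nonneg _) ((norm_nonneg _).trans (hf s hs')))

theorem norm_le_pow_div_factorial_of_eq_integral_mul {F : ℕ → ℝ → E} {g : ℝ → E}
    {C M t : ℝ} (hF : ∀ N u, F (N + 1) u = ∫ s in 0..u, F N s * g s)
    (hF₀ : ∀ s ∈ Icc 0 t, ‖F 0 s‖ ≤ C) (hg : ∀ s ∈ Icc 0 t, ‖g s‖ ≤ M) :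
    ∀ N, ∀ u ∈ Icc 0 t, ‖F N u‖ ≤ C * ((M * u) ^ N / N !)
  | 0 => by simpa using hF₀
  | N + 1 => fun u hu => hF N u ▸ norm_integral_mul_le_pow_div_factorial
      (norm_le_pow_div_factorial_of_eq_integral_mul hF hF₀ hg N) hg hu

end IteratedIntegral

section InteractionPicture

variable {𝔸 : Type*} [NormedRing 𝔸] [NormedAlgebra ℝ 𝔸] [CompleteSpace 𝔸]

theorem continuous_exp_smul (X : 𝔸) : Continuous fun u : ℝ => exp (u • X) :=
  continuous_iff_continuousAt.2 fun s => (hasDerivAt_exp_smul_const X s).continuousAt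

theorem exp_neg_smul_mul_exp_smul (X : 𝔸) (s : ℝ) : exp ((-s) • X) * exp (s • X) = 1 := by
  let : NormedAlgebra ℚ 𝔸 := .restrictScalars ℚ ℝ 𝔸
  rw [← exp_add_of_commute (((Commute.refl X).smul_left _).smul_right _), ← add_smul,
    neg_add_cancel, zero_smul, exp_zero]

theorem hasDerivAt_exp_smul_add_mul_exp_neg_smul (X Y : 𝔸) (s : ℝ) :
    HasDerivAt (fun u : ℝ => exp (u • (X + Y)) * exp ((-u) • X))
      (exp (s • (X + Y)) * exp ((-s) • X) * (exp (s • X) * Y * exp ((-s) • X))) s := by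
  have hneg : HasDerivAt (fun u : ℝ => exp ((-u) • X)) (-(exp ((-s) • X) * X)) s := by
    simpa [Function.comp_def] using (hasDerivAt_exp_smul_const X (-s)).scomp s (hasDerivAt_neg s)
  refine ((hasDerivAt_exp_smul_const (X + Y) s).mul hneg).congr_deriv ?_
  have hinv := exp_neg_smul_mul_exp_smul X s
  have hcomm : exp ((-s) • X) * X = X * exp ((-s) • X) :=
    (((Commute.refl X).smul_right (-s)).exp_right).symm.eq
  set E := exp (s • (X + Y))
  set F := exp ((-s) • X)
  calc E * (X + Y) * F + E * -(F * X) = E * (X + Y) * F + E * -(X * F) := by rw [hcomm]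
    _ = E * ((F * exp (s • X)) * (Y * F)) := by rw [hinv]; noncomm_ring
    _ = E * F * (exp (s • X) * Y * F) := by noncomm_ring

theorem exp_smul_add_mul_exp_neg_smul_eq_one_add_integral (X Y : 𝔸) (u : ℝ) :
    exp (u • (X + Y)) * exp ((-u) • X) =
      1 + ∫ s in 0..u,
        exp (s • (X + Y)) * exp ((-s) • X) * (exp (s • X) * Y * exp ((-s) • X)) := by
  have hexp := continuous_exp_smul (𝔸 := 𝔸)
  have hcont : Continuous fun s : ℝ =>
      exp (s • (X + Y)) * exp ((-s) • X) * (exp (s • X) * Y * exp ((-s) • X)) :=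
    ((hexp _).mul ((hexp X).comp continuous_neg)).mul
      (((hexp X).mul continuous_const).mul ((hexp X).comp continuous_neg))
  rw [intervalIntegral.integral_eq_sub_of_hasDerivAt
    (fun s _ => hasDerivAt_exp_smul_add_mul_exp_neg_smul X Y s) (hcont.intervalIntegrable 0 u)]
  simp

end InteractionPicture

section Dyson

variable {n : ℕ} (X Y : Matrix (Fin n) (Fin n) ℂ)

theorem continuous_dysonY : Continuous (dysonY X Y) :=
  ((continuous_exp_smul X).mul continuous_const).mul ((continuous_exp_smul X).comp continuous_neg)

theorem continuous_dysonG : ∀ j, Continuous (dysonG X Y j)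
  | 0 => continuous_const
  | j + 1 => intervalIntegral.continuous_primitive
      (fun _ _ => ((continuous_dysonG j).mul (continuous_dysonY X Y)).intervalIntegrable _ _) 0

theorem sum_range_succ_dysonG (N : ℕ) (u : ℝ) :
    ∑ j ∈ range (N + 1), dysonG X Y j u =
      1 + ∫ s in 0..u, (∑ j ∈ range N, dysonG X Y j s) * dysonY X Y s := by
  simp_rw [Finset.sum_mul]
  rw [intervalIntegral.integral_finsetSum (f := fun j s => dysonG X Y j s * dysonY X Y s)
    fun j _ => ((continuous_dysonG X Y j).mul (continuous_dysonY X Y)).intervalIntegrable 0 u,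
    sum_range_succ', add_comm]
  rfl

theorem norm_dysonG_le {M t : ℝ} (hY : ∀ s ∈ Icc 0 t, ‖dysonY X Y s‖ ≤ M) (j : ℕ) {u : ℝ}
    (hu : u ∈ Icc 0 t) :
    ‖dysonG X Y j u‖ ≤ ‖(1 : Matrix (Fin n) (Fin n) ℂ)‖ * ((M * u) ^ j / j !) :=
  norm_le_pow_div_factorial_of_eq_integral_mul (fun _ _ => rfl) (fun _ _ => le_rfl) hY j u hu

theorem summable_norm_dysonG {t : ℝ} (ht : 0 ≤ t) : Summable fun j => ‖dysonG X Y j t‖ := by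
  obtain ⟨M, hM⟩ := (isCompact_Icc (a := 0) (b := t)).exists_bound_of_continuousOn
    (continuous_dysonY X Y).continuousOn
  exact .of_nonneg_of_le (fun _ => norm_nonneg _) (fun j => norm_dysonG_le X Y hM j ⟨ht, le_rfl⟩)
    ((Real.summable_pow_div_factorial _).mul_left _)

theorem tendsto_sum_range_dysonG {A : ℝ → Matrix (Fin n) (Fin n) ℂ} (hA : Continuous A)
    (hA_eq : ∀ u, A u = 1 + ∫ s in 0..u, A s * dysonY X Y s) {t : ℝ} (ht : 0 ≤ t) :
    Tendsto (fun N => ∑ j ∈ range N, dysonG X Y j t) atTop (𝓝 (A t)) := by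
  obtain ⟨M, hM⟩ := (isCompact_Icc (a := 0) (b := t)).exists_bound_of_continuousOn
    (continuous_dysonY X Y).continuousOn
  obtain ⟨C, hC⟩ := (isCompact_Icc (a := 0) (b := t)).exists_bound_of_continuousOn
    hA.continuousOn
  have hrec : ∀ N u, A u - ∑ j ∈ range (N + 1), dysonG X Y j u =
      ∫ s in 0..u, (A s - ∑ j ∈ range N, dysonG X Y j s) * dysonY X Y s := by
    intro N u
    have hS := continuous_finsetSum (range N) fun j _ => continuous_dysonG X Y j
    simp_rw [sub_mul]
    rw [sum_range_succ_dysonG, hA_eq u, add_sub_add_left_eq_sub,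
      intervalIntegral.integral_sub (f := fun s => A s * dysonY X Y s)
        (g := fun s => (∑ j ∈ range N, dysonG X Y j s) * dysonY X Y s)
        ((hA.mul (continuous_dysonY X Y)).intervalIntegrable 0 u)
        ((hS.mul (continuous_dysonY X Y)).intervalIntegrable 0 u)]
  have hbound := norm_le_pow_div_factorial_of_eq_integral_mul
    (F := fun N u => A u - ∑ j ∈ range N, dysonG X Y j u) hrec (by simpa using hC) hM
  rw [tendsto_iff_norm_sub_tendsto_zero]
  refine squeeze_zero (fun _ => norm_nonneg _)
    (fun N => (norm_sub_rev _ _).trans_le (hbound N t ⟨ht, le_rfl⟩)) ?_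
  simpa using (Real.summable_pow_div_factorial (M * t)).tendsto_atTop_zero.const_mul C

end Dyson

/-- Dyson expansion: `e^{t(X+Y)} = ∑_j G_j(t) e^{tX}`, the series converging
absolutely in operator norm. -/
theorem dyson_expansion {n : ℕ} (X Y : Matrix (Fin n) (Fin n) ℂ) (t : ℝ) (ht : 0 ≤ t) :
    HasSum (fun j : ℕ => dysonG X Y j t * NormedSpace.exp (t • X))
        (NormedSpace.exp (t • (X + Y))) ∧
      Summable (fun j : ℕ => ‖dysonG X Y j t * NormedSpace.exp (t • X)‖) := by
  have hsum : Summable fun j => ‖dysonG X Y j t * exp (t • X)‖ :=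
    Summable.of_nonneg_of_le (fun _ => norm_nonneg _) (fun _ => norm_mul_le _ _)
      ((summable_norm_dysonG X Y ht).mul_right _)
  refine ⟨(hasSum_iff_tendsto_nat_of_summable_norm hsum).2 ?_, hsum⟩
  have hA : Continuous fun s : ℝ => exp (s • (X + Y)) * exp ((-s) • X) :=
    continuous_iff_continuousAt.2 fun s =>
      (hasDerivAt_exp_smul_add_mul_exp_neg_smul X Y s).continuousAt
  have hlim := (tendsto_sum_range_dysonG X Y hA
    (exp_smul_add_mul_exp_neg_smul_eq_one_add_integral X Y) ht).mul_const (exp (t • X))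
  simpa only [← Finset.sum_mul, mul_assoc, exp_neg_smul_mul_exp_smul, mul_one] using hlim
end

section
/- Let H and H̃ be Hermitian n×n matrices with H̃ ≤ H, and suppose that the projection P̃ onto the span of the j+1 lowest eigenvectors of H̃ satisfies ‖P̃(H - H̃)P̃‖ ≤ δ. Then the eigenvalues (in increasing order, with multiplicity) satisfy ε_j - δ ≤ ε̃_j ≤ ε_j. -/
open scoped Matrix.Norms.L2Operator Classical ComplexOrder

/-- The orthogonal projection onto the span of the `j+1` lowest eigenvectors of a
Hermitian matrix (eigenvalues taken in increasing order with multiplicity). -/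
noncomputable def lowProj {n : ℕ} {H : Matrix (Fin n) (Fin n) ℂ}
    (hH : H.IsHermitian) (j : ℕ) : Matrix (Fin n) (Fin n) ℂ :=
  (hH.eigenvectorUnitary : Matrix (Fin n) (Fin n) ℂ) *
    (Matrix.diagonal fun i =>
      if ((Tuple.sort hH.eigenvalues).symm i : ℕ) < j + 1 then (1 : ℂ) else 0) *
    star (hH.eigenvectorUnitary : Matrix (Fin n) (Fin n) ℂ)

/-! Both bounds come from the easy half of Courant–Fischer: if the quadratic form of a Hermitian
`A` is at most `c ‖v‖²` on a subspace of dimension `j + 1`, then `ε_j(A) ≤ c`, since that subspace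
meets the span of the eigenvectors of `A` of index `≥ j`, where the form is at least `ε_j(A) ‖v‖²`.
For `ε̃_j ≤ ε_j`, test `H̃ ≤ H` on the span of the `j + 1` lowest eigenvectors of `H`. For
`ε_j - δ ≤ ε̃_j`, test `H = H̃ + (H - H̃)` on the span of the `j + 1` lowest eigenvectors of `H̃`:
`P̃` fixes that span, so there `⟪v, (H - H̃) v⟫ = ⟪v, P̃ (H - H̃) P̃ v⟫ ≤ δ ‖v‖²`. -/

theorem Matrix.re_inner_toEuclideanLin_le_of_apply_eq_self {m 𝕜 : Type*} [Fintype m]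
    [DecidableEq m] [RCLike 𝕜] {P A : Matrix m m 𝕜} (hP : P.IsHermitian) {v : EuclideanSpace 𝕜 m}
    (hv : toEuclideanLin P v = v) :
    RCLike.re (inner 𝕜 v (toEuclideanLin A v)) ≤ ‖P * A * P‖ * ‖v‖ ^ 2 := by
  have hPAP : inner 𝕜 v (toEuclideanLin A v) = inner 𝕜 v (toEuclideanLin (P * A * P) v) := by
    simp only [toLpLin_mul_same, LinearMap.comp_apply, hv]
    rw [← isSymmetric_toEuclideanLin_iff.mpr hP, hv]
  calc RCLike.re (inner 𝕜 v (toEuclideanLin A v))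
      ≤ ‖inner 𝕜 v (toEuclideanLin (P * A * P) v)‖ := hPAP ▸ RCLike.re_le_norm _
    _ ≤ ‖v‖ * ‖toEuclideanLin (P * A * P) v‖ := norm_inner_le_norm _ _
    _ ≤ ‖v‖ * (‖P * A * P‖ * ‖v‖) := by gcongr; exact l2_opNorm_mulVec _ v
    _ = ‖P * A * P‖ * ‖v‖ ^ 2 := by ring

namespace Matrix.IsHermitian

variable {n : ℕ} {M : Matrix (Fin n) (Fin n) ℂ}

noncomputable def sortedEigenvectorBasis (hM : M.IsHermitian) :
    OrthonormalBasis (Fin n) ℂ (EuclideanSpace ℂ (Fin n)) :=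
  hM.eigenvectorBasis.reindex (Tuple.sort hM.eigenvalues).symm

theorem sortedEigenvectorBasis_apply (hM : M.IsHermitian) (k : Fin n) :
    hM.sortedEigenvectorBasis k = hM.eigenvectorBasis (Tuple.sort hM.eigenvalues k) := by
  simp [sortedEigenvectorBasis]

theorem sortedEig_monotone (hM : M.IsHermitian) : Monotone (sortedEig hM) :=
  Tuple.monotone_sort _

theorem toEuclideanLin_sortedEigenvectorBasis (hM : M.IsHermitian) (k : Fin n) :
    toEuclideanLin M (hM.sortedEigenvectorBasis k)
      = (sortedEig hM k : ℂ) • hM.sortedEigenvectorBasis k := by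
  ext i
  simp [toLpLin_apply, sortedEigenvectorBasis_apply, hM.mulVec_eigenvectorBasis, sortedEig]

theorem repr_toEuclideanLin (hM : M.IsHermitian) (v : EuclideanSpace ℂ (Fin n)) (k : Fin n) :
    hM.sortedEigenvectorBasis.repr (toEuclideanLin M v) k
      = sortedEig hM k * hM.sortedEigenvectorBasis.repr v k := by
  rw [OrthonormalBasis.repr_apply_apply, OrthonormalBasis.repr_apply_apply,
    ← isSymmetric_toEuclideanLin_iff.mpr hM, toEuclideanLin_sortedEigenvectorBasis,
    inner_smul_left, Complex.conj_ofReal]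

theorem re_inner_toEuclideanLin_eq_sum (hM : M.IsHermitian) (v : EuclideanSpace ℂ (Fin n)) :
    RCLike.re (inner ℂ v (toEuclideanLin M v))
      = ∑ k, sortedEig hM k * ‖hM.sortedEigenvectorBasis.repr v k‖ ^ 2 := by
  rw [← hM.sortedEigenvectorBasis.repr.inner_map_map, PiLp.inner_apply, map_sum]
  refine Finset.sum_congr rfl fun k _ => ?_
  rw [repr_toEuclideanLin, RCLike.inner_apply, mul_assoc, RCLike.mul_conj,
    RCLike.re_to_complex, Complex.re_ofReal_mul]
  norm_cast

theorem norm_sq_eq_sum_repr (hM : M.IsHermitian) (v : EuclideanSpace ℂ (Fin n)) :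
    ‖v‖ ^ 2 = ∑ k, ‖hM.sortedEigenvectorBasis.repr v k‖ ^ 2 := by
  rw [← hM.sortedEigenvectorBasis.repr.norm_map, EuclideanSpace.norm_sq_eq]

theorem re_inner_toEuclideanLin_le (hM : M.IsHermitian) {v : EuclideanSpace ℂ (Fin n)}
    {j : Fin n} (hv : ∀ k, j < k → hM.sortedEigenvectorBasis.repr v k = 0) :
    RCLike.re (inner ℂ v (toEuclideanLin M v)) ≤ sortedEig hM j * ‖v‖ ^ 2 := by
  rw [re_inner_toEuclideanLin_eq_sum, norm_sq_eq_sum_repr hM, Finset.mul_sum]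
  refine Finset.sum_le_sum fun k _ => ?_
  rcases le_or_gt k j with hkj | hjk
  · exact mul_le_mul_of_nonneg_right (hM.sortedEig_monotone hkj) (by positivity)
  · simp [hv k hjk]

theorem le_re_inner_toEuclideanLin (hM : M.IsHermitian) {v : EuclideanSpace ℂ (Fin n)}
    {j : Fin n} (hv : ∀ k, k < j → hM.sortedEigenvectorBasis.repr v k = 0) :
    sortedEig hM j * ‖v‖ ^ 2 ≤ RCLike.re (inner ℂ v (toEuclideanLin M v)) := by
  rw [re_inner_toEuclideanLin_eq_sum, norm_sq_eq_sum_repr hM, Finset.mul_sum]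
  refine Finset.sum_le_sum fun k _ => ?_
  rcases lt_or_ge k j with hkj | hjk
  · simp [hv k hkj]
  · exact mul_le_mul_of_nonneg_right (hM.sortedEig_monotone hjk) (by positivity)

theorem sortedEig_le_of_finrank_le (hM : M.IsHermitian) (j : Fin n) {c : ℝ}
    (V : Submodule ℂ (EuclideanSpace ℂ (Fin n))) (hV : (j : ℕ) + 1 ≤ Module.finrank ℂ V)
    (hc : ∀ v ∈ V, RCLike.re (inner ℂ v (toEuclideanLin M v)) ≤ c * ‖v‖ ^ 2) :
    sortedEig hM j ≤ c := by
  let f : V →ₗ[ℂ] Fin j → ℂ :=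
    LinearMap.pi fun k => (EuclideanSpace.proj (Fin.castLE j.2.le k)).toLinearMap ∘ₗ
      hM.sortedEigenvectorBasis.repr.toLinearMap ∘ₗ V.subtype
  have hker : LinearMap.ker f ≠ ⊥ :=
    LinearMap.ker_ne_bot_of_finrank_lt (by rw [Module.finrank_fin_fun]; omega)
  obtain ⟨⟨v, hvV⟩, hfv, hv0⟩ := Submodule.exists_mem_ne_zero_of_ne_bot hker
  have hlow : ∀ k, k < j → hM.sortedEigenvectorBasis.repr v k = 0 := fun k hk =>
    congr_fun (LinearMap.mem_ker.mp hfv) ⟨k, hk⟩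
  have hpos : 0 < ‖v‖ ^ 2 := by
    have : v ≠ 0 := fun h => hv0 (by simp [h])
    positivity
  exact le_of_mul_le_mul_right ((le_re_inner_toEuclideanLin hM hlow).trans (hc v hvV)) hpos

noncomputable def lowSpan (hM : M.IsHermitian) (j : Fin n) :
    Submodule ℂ (EuclideanSpace ℂ (Fin n)) :=
  Submodule.span ℂ (Set.range fun k : Finset.Iic j => hM.sortedEigenvectorBasis k)

theorem finrank_lowSpan (hM : M.IsHermitian) (j : Fin n) :
    Module.finrank ℂ (hM.lowSpan j) = j + 1 := by
  refine (finrank_span_eq_card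
    (hM.sortedEigenvectorBasis.orthonormal.linearIndependent.comp _ Subtype.val_injective)).trans ?_
  rw [Fintype.card_coe, Fin.card_Iic]

theorem repr_eq_zero_of_mem_lowSpan (hM : M.IsHermitian) {j k : Fin n}
    {v : EuclideanSpace ℂ (Fin n)} (hv : v ∈ hM.lowSpan j) (hjk : j < k) :
    hM.sortedEigenvectorBasis.repr v k = 0 := by
  induction hv using Submodule.span_induction with
  | mem _ hx =>
    obtain ⟨⟨i, hi⟩, rfl⟩ := hx
    have : i ≠ k := ((Finset.mem_Iic.mp hi).trans_lt hjk).ne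
    simp [this.symm]
  | zero => simp
  | add _ _ _ _ hx hy => simp [hx, hy]
  | smul _ _ _ hx => simp [hx]

theorem re_inner_toEuclideanLin_le_of_mem_lowSpan (hM : M.IsHermitian) {j : Fin n}
    {v : EuclideanSpace ℂ (Fin n)} (hv : v ∈ hM.lowSpan j) :
    RCLike.re (inner ℂ v (toEuclideanLin M v)) ≤ sortedEig hM j * ‖v‖ ^ 2 :=
  re_inner_toEuclideanLin_le hM fun _ hjk => repr_eq_zero_of_mem_lowSpan hM hv hjk

theorem sortedEig_le_add_of_lowSpan {A B : Matrix (Fin n) (Fin n) ℂ} (hA : A.IsHermitian)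
    (hB : B.IsHermitian) (j : Fin n) {c : ℝ}
    (h : ∀ v ∈ hB.lowSpan j, RCLike.re (inner ℂ v (toEuclideanLin A v))
      ≤ RCLike.re (inner ℂ v (toEuclideanLin B v)) + c * ‖v‖ ^ 2) :
    sortedEig hA j ≤ sortedEig hB j + c :=
  sortedEig_le_of_finrank_le hA j (hB.lowSpan j) (finrank_lowSpan hB j).ge fun v hv => by
    have := re_inner_toEuclideanLin_le_of_mem_lowSpan hB hv
    linarith [h v hv]

theorem toEuclideanLin_lowProj_of_mem_lowSpan (hM : M.IsHermitian) {j : Fin n}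
    {v : EuclideanSpace ℂ (Fin n)} (hv : v ∈ hM.lowSpan j) :
    toEuclideanLin (lowProj hM j) v = v := by
  refine (Submodule.span_le.mpr ?_ : hM.lowSpan j ≤ LinearMap.eqLocus _ LinearMap.id) hv
  rintro _ ⟨⟨k, hk⟩, rfl⟩
  have hk : ((Tuple.sort hM.eigenvalues).symm (Tuple.sort hM.eigenvalues k) : ℕ) < j + 1 := by
    simpa [Nat.lt_succ_iff] using Finset.mem_Iic.mp hk
  ext i
  simp only [LinearMap.id_apply, toLpLin_apply, lowProj,
    sortedEigenvectorBasis_apply, ← mulVec_mulVec, star_eigenvectorUnitary_mulVec,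
    diagonal_mulVec_single, if_pos hk, mul_one, eigenvectorUnitary_mulVec]

theorem lowProj_isHermitian (hM : M.IsHermitian) (j : ℕ) : (lowProj hM j).IsHermitian := by
  refine isHermitian_mul_mul_conjTranspose _ (isHermitian_diagonal_of_self_adjoint _ ?_)
  funext i
  exact apply_ite star _ _ _ |>.trans (by simp)

end Matrix.IsHermitian

/-- If `H̃ ≤ H` and the projection `P̃` onto the `j+1` lowest eigenvectors of `H̃`
satisfies `‖P̃(H - H̃)P̃‖ ≤ δ`, then `ε_j - δ ≤ ε̃_j ≤ ε_j`. -/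
theorem eigenvalue_truncation_bound {n : ℕ} {H Ht : Matrix (Fin n) (Fin n) ℂ}
    (hH : H.PosSemidef) (hHt : Ht.PosSemidef) (hle : (H - Ht).PosSemidef)
    (j : Fin n) (δ : ℝ)
    (hδ : ‖lowProj hHt.1 (j : ℕ) * (H - Ht) * lowProj hHt.1 (j : ℕ)‖ ≤ δ) :
    sortedEig hH.1 j - δ ≤ sortedEig hHt.1 j ∧ sortedEig hHt.1 j ≤ sortedEig hH.1 j := by
  have hsplit : ∀ v : EuclideanSpace ℂ (Fin n),
      RCLike.re (inner ℂ v (Matrix.toEuclideanLin H v))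
        = RCLike.re (inner ℂ v (Matrix.toEuclideanLin Ht v))
          + RCLike.re (inner ℂ v (Matrix.toEuclideanLin (H - Ht) v)) := fun v => by
    rw [map_sub, LinearMap.sub_apply, inner_sub_right, map_sub]
    ring
  constructor
  · have := hH.1.sortedEig_le_add_of_lowSpan hHt.1 j (c := δ) fun v hv => by
      have hgap := Matrix.re_inner_toEuclideanLin_le_of_apply_eq_self (A := H - Ht)
        (hHt.1.lowProj_isHermitian j) (hHt.1.toEuclideanLin_lowProj_of_mem_lowSpan hv)
      rw [hsplit v]
      gcongr
      exact hgap.trans (by gcongr)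
    linarith
  · simpa using hHt.1.sortedEig_le_add_of_lowSpan hH.1 j (c := 0) fun v _ => by
      have := (Matrix.isPositive_toEuclideanLin_iff.mpr hle).re_inner_nonneg_right v
      linarith [hsplit v]
end

section
/- Let H be a Hermitian positive semidefinite n×n matrix, A a matrix with ‖A‖ ≤ 1, ε ≥ 0, λ > 0, R ≥ 0. Suppose for all ε′ ≥ ε the spectral projections satisfy ‖Π_{[ε′,∞)} A Π_{[0,ε]}‖ ≤ e^{-λ(ε′-ε-2R)}. Let |ψ⟩ be a unit vector, |φ⟩ = A Π_{[0,ε]}|ψ⟩ (assumed nonzero), and ε_φ = ⟨φ|H|φ⟩/‖φ‖². Then ‖φ‖ ≤ (2/√λ)·e^{-λ(ε_φ - ε - 2R)}, provided λ ≤ 1/2. -/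
/-!
Expand `φ` in an eigenbasis of `H`, with weights `wᵢ`. By the layer-cake formula
`∑ wᵢ (λᵢ - μ)⁺ = ∫_μ^∞ ‖Π_{[t,∞)} φ‖² dt`, and for `t ≥ ε` the hypothesis bounds
`‖Π_{[t,∞)} φ‖ = ‖Π_{[t,∞)} A Π_{[0,ε]} ψ‖` by `e^{-λ(t-ε-2R)}`. Hence
`ε_φ ‖φ‖² = ∑ wᵢ λᵢ ≤ μ ‖φ‖² + e^{-2λ(μ-ε-2R)} / (2λ)`, and the choice `μ = ε_φ - 1`
leaves `‖φ‖² ≤ e^{2λ} e^{-2λ(ε_φ-ε-2R)} / (2λ)` with `e^{2λ} ≤ 8`. This choice needs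
`μ ≥ ε`; in the remaining case `ε_φ - ε - 2R ≤ 1` the right-hand side is at least `1 ≥ ‖φ‖`.
-/

open scoped Matrix.Norms.L2Operator Classical ComplexOrder

open MeasureTheory Set Matrix WithLp

section RealAnalysis

/-- The layer-cake formula for a finite weighted family of points of `ℝ`. -/
lemma integral_Ioi_sum_filter_le_eq {ι : Type*} [Fintype ι] (w a : ι → ℝ) (μ : ℝ) :
    ∫ t in Ioi μ, ∑ i with t ≤ a i, w i = ∑ i, w i * max (a i - μ) 0 := by
  have hind : ∀ t, ∑ i with t ≤ a i, w i = ∑ i, (Iic (a i)).indicator (fun _ => w i) t := by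
    intro t
    simp only [Finset.sum_filter, indicator_apply, mem_Iic]
  have hint : ∀ i, IntegrableOn ((Iic (a i)).indicator fun _ => w i) (Ioi μ) := by
    intro i
    rw [IntegrableOn, integrable_indicator_iff measurableSet_Iic, IntegrableOn,
      Measure.restrict_restrict measurableSet_Iic, Iic_inter_Ioi]
    exact integrableOn_const measure_Ioc_lt_top.ne
  simp_rw [hind]
  rw [integral_finsetSum _ fun i _ => hint i]
  refine Finset.sum_congr rfl fun i _ => ?_
  rw [setIntegral_indicator measurableSet_Iic, Ioi_inter_Iic, setIntegral_const,
    Real.volume_real_Ioc, smul_eq_mul, mul_comm]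

lemma exp_neg_mul_sub_eq (b c t : ℝ) :
    Real.exp (-b * (t - c)) = Real.exp (b * c) * Real.exp (-b * t) := by
  rw [← Real.exp_add]
  ring_nf

lemma integrableOn_Ioi_exp_neg_mul_sub {b : ℝ} (hb : 0 < b) (μ c : ℝ) :
    IntegrableOn (fun t => Real.exp (-b * (t - c))) (Ioi μ) := by
  simp_rw [exp_neg_mul_sub_eq]
  exact (integrableOn_exp_mul_Ioi (neg_lt_zero.2 hb) μ).const_mul _

lemma integral_Ioi_exp_neg_mul_sub {b : ℝ} (hb : 0 < b) (μ c : ℝ) :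
    ∫ t in Ioi μ, Real.exp (-b * (t - c)) = Real.exp (-b * (μ - c)) / b := by
  simp_rw [exp_neg_mul_sub_eq, integral_const_mul, integral_exp_mul_Ioi (neg_lt_zero.2 hb)]
  rw [neg_div_neg_eq, mul_div_assoc]

lemma sum_mul_le_of_sum_filter_le_exp {ι : Type*} [Fintype ι] {w a : ι → ℝ}
    (hw : ∀ i, 0 ≤ w i) {μ b c : ℝ} (hb : 0 < b)
    (htail : ∀ t, μ < t → ∑ i with t ≤ a i, w i ≤ Real.exp (-b * (t - c))) :
    ∑ i, a i * w i ≤ μ * ∑ i, w i + Real.exp (-b * (μ - c)) / b := by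
  have hexcess : ∑ i, w i * max (a i - μ) 0 ≤ Real.exp (-b * (μ - c)) / b := by
    rw [← integral_Ioi_sum_filter_le_eq, ← integral_Ioi_exp_neg_mul_sub hb]
    refine integral_mono_of_nonneg (.of_forall fun t => Finset.sum_nonneg fun i _ => hw i)
      (integrableOn_Ioi_exp_neg_mul_sub hb μ c) ?_
    exact (ae_restrict_iff' measurableSet_Ioi).2 (.of_forall htail)
  have hsplit : ∀ i, a i * w i ≤ μ * w i + w i * max (a i - μ) 0 := fun i => by
    nlinarith [hw i, le_max_left (a i - μ) 0]
  calc ∑ i, a i * w i ≤ ∑ i, (μ * w i + w i * max (a i - μ) 0) :=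
        Finset.sum_le_sum fun i _ => hsplit i
    _ = μ * ∑ i, w i + ∑ i, w i * max (a i - μ) 0 := by
        rw [Finset.sum_add_distrib, Finset.mul_sum]
    _ ≤ _ := by linarith

end RealAnalysis

section UnitaryConj

variable {ι : Type*} [Fintype ι] [DecidableEq ι] {U : Matrix ι ι ℂ}

lemma norm_toEuclideanLin_apply_le (M : Matrix ι ι ℂ) (v : EuclideanSpace ℂ ι) :
    ‖toEuclideanLin M v‖ ≤ ‖M‖ * ‖v‖ := by
  rw [← l2_opNorm_toEuclideanCLM]
  exact (toEuclideanCLM (n := ι) (𝕜 := ℂ) M).le_opNorm v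

lemma norm_toEuclideanLin_apply_apply_le (M N : Matrix ι ι ℂ) (v : EuclideanSpace ℂ ι) :
    ‖toEuclideanLin M (toEuclideanLin N v)‖ ≤ ‖M * N‖ * ‖v‖ := by
  simpa only [toLpLin_mul_same, LinearMap.comp_apply] using
    norm_toEuclideanLin_apply_le (M * N) v

lemma norm_toEuclideanLin_of_mem_unitaryGroup (hU : U ∈ unitaryGroup ι ℂ)
    (v : EuclideanSpace ℂ ι) : ‖toEuclideanLin U v‖ = ‖v‖ :=
  ContinuousLinearMap.norm_map_of_mem_unitary
    (Unitary.map_mem (toEuclideanCLM (n := ι) (𝕜 := ℂ)) hU) v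

lemma inner_toEuclideanLin_of_mem_unitaryGroup (hU : U ∈ unitaryGroup ι ℂ)
    (v w : EuclideanSpace ℂ ι) :
    inner ℂ (toEuclideanLin U v) (toEuclideanLin U w) = inner ℂ v w :=
  ContinuousLinearMap.inner_map_map_of_mem_unitary
    (Unitary.map_mem (toEuclideanCLM (n := ι) (𝕜 := ℂ)) hU) v w

lemma sum_norm_sq_star_mulVec (hU : U ∈ unitaryGroup ι ℂ) (v : EuclideanSpace ℂ ι) :
    ∑ i, ‖(star U *ᵥ ofLp v) i‖ ^ 2 = ‖v‖ ^ 2 := by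
  rw [← norm_toEuclideanLin_of_mem_unitaryGroup (Unitary.star_mem hU) v,
    EuclideanSpace.norm_sq_eq]
  rfl

lemma star_mulVec_conj_diagonal_mulVec (hU : U ∈ unitaryGroup ι ℂ) (g x : ι → ℂ) (i : ι) :
    (star U *ᵥ ((U * diagonal g * star U) *ᵥ x)) i = g i * (star U *ᵥ x) i := by
  rw [mulVec_mulVec, ← mul_assoc, ← mul_assoc, Unitary.star_mul_self_of_mem hU, one_mul,
    ← mulVec_mulVec, mulVec_diagonal]

lemma norm_toEuclideanLin_conj_diagonal_sq (hU : U ∈ unitaryGroup ι ℂ) (g : ι → ℂ)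
    (v : EuclideanSpace ℂ ι) :
    ‖toEuclideanLin (U * diagonal g * star U) v‖ ^ 2 =
      ∑ i, ‖g i‖ ^ 2 * ‖(star U *ᵥ ofLp v) i‖ ^ 2 := by
  rw [← norm_toEuclideanLin_of_mem_unitaryGroup (Unitary.star_mem hU),
    EuclideanSpace.norm_sq_eq]
  simp only [toLpLin_apply, PiLp.toLp_apply, star_mulVec_conj_diagonal_mulVec hU, norm_mul,
    mul_pow]

lemma inner_toEuclideanLin_conj_diagonal (hU : U ∈ unitaryGroup ι ℂ) (g : ι → ℂ)
    (v : EuclideanSpace ℂ ι) :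
    inner ℂ v (toEuclideanLin (U * diagonal g * star U) v) =
      ∑ i, g i * (‖(star U *ᵥ ofLp v) i‖ : ℂ) ^ 2 := by
  rw [← inner_toEuclideanLin_of_mem_unitaryGroup (Unitary.star_mem hU), PiLp.inner_apply]
  refine Finset.sum_congr rfl fun i _ => ?_
  simp only [toLpLin_apply, PiLp.toLp_apply, star_mulVec_conj_diagonal_mulVec hU,
    RCLike.inner_apply]
  rw [mul_assoc, RCLike.mul_conj]
  rfl

end UnitaryConj

section Spectral

variable {n : ℕ} {H : Matrix (Fin n) (Fin n) ℂ}

/-- `|⟨eᵢ, v⟩|²` for the `i`-th eigenvector `eᵢ` of `H`. -/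
noncomputable def spectralWeight (hH : H.IsHermitian) (v : EuclideanSpace ℂ (Fin n))
    (i : Fin n) : ℝ :=
  ‖(star (hH.eigenvectorUnitary : Matrix (Fin n) (Fin n) ℂ) *ᵥ ofLp v) i‖ ^ 2

lemma spectralWeight_nonneg (hH : H.IsHermitian) (v : EuclideanSpace ℂ (Fin n)) (i : Fin n) :
    0 ≤ spectralWeight hH v i :=
  sq_nonneg _

lemma sum_spectralWeight (hH : H.IsHermitian) (v : EuclideanSpace ℂ (Fin n)) :
    ∑ i, spectralWeight hH v i = ‖v‖ ^ 2 :=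
  sum_norm_sq_star_mulVec hH.eigenvectorUnitary.2 v

lemma norm_spectralProj_apply_sq (hH : H.IsHermitian) (S : Set ℝ)
    (v : EuclideanSpace ℂ (Fin n)) :
    ‖toEuclideanLin (spectralProj hH S) v‖ ^ 2 =
      ∑ i with hH.eigenvalues i ∈ S, spectralWeight hH v i := by
  rw [spectralProj, norm_toEuclideanLin_conj_diagonal_sq hH.eigenvectorUnitary.2,
    Finset.sum_filter]
  refine Finset.sum_congr rfl fun i _ => ?_
  split_ifs <;> simp [spectralWeight]

lemma norm_spectralProj_le_one (hH : H.IsHermitian) (S : Set ℝ) :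
    ‖spectralProj hH S‖ ≤ 1 := by
  rw [← l2_opNorm_toEuclideanCLM]
  refine ContinuousLinearMap.opNorm_le_bound _ zero_le_one fun v => ?_
  rw [one_mul, ← pow_le_pow_iff_left₀ (norm_nonneg _) (norm_nonneg v) two_ne_zero]
  change ‖toEuclideanLin (spectralProj hH S) v‖ ^ 2 ≤ ‖v‖ ^ 2
  rw [norm_spectralProj_apply_sq, ← sum_spectralWeight hH v]
  exact Finset.sum_le_sum_of_subset_of_nonneg (Finset.filter_subset _ _)
    fun i _ _ => spectralWeight_nonneg hH v i

lemma re_inner_toEuclideanLin_self (hH : H.IsHermitian) (v : EuclideanSpace ℂ (Fin n)) :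
    (inner ℂ v (toEuclideanLin H v)).re = ∑ i, hH.eigenvalues i * spectralWeight hH v i := by
  conv_lhs => rw [hH.spectral_theorem, Unitary.conjStarAlgAut_apply,
    inner_toEuclideanLin_conj_diagonal hH.eigenvectorUnitary.2, Complex.re_sum]
  refine Finset.sum_congr rfl fun i _ => ?_
  simp [spectralWeight, ← Complex.ofReal_pow]

lemma re_inner_le_of_norm_spectralProj_Ici_le (hH : H.IsHermitian)
    (v : EuclideanSpace ℂ (Fin n)) {μ b c : ℝ} (hb : 0 < b)
    (htail : ∀ t, μ < t →
      ‖toEuclideanLin (spectralProj hH (Ici t)) v‖ ≤ Real.exp (-b * (t - c))) :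
    (inner ℂ v (toEuclideanLin H v)).re ≤
      μ * ‖v‖ ^ 2 + Real.exp (-(2 * b) * (μ - c)) / (2 * b) := by
  rw [re_inner_toEuclideanLin_self, ← sum_spectralWeight hH v]
  refine sum_mul_le_of_sum_filter_le_exp (spectralWeight_nonneg hH v) (by positivity)
    fun t ht => ?_
  calc ∑ i with t ≤ hH.eigenvalues i, spectralWeight hH v i
      = ‖toEuclideanLin (spectralProj hH (Ici t)) v‖ ^ 2 :=
        (norm_spectralProj_apply_sq ..).symm
    _ ≤ Real.exp (-b * (t - c)) ^ 2 := by gcongr; exact htail t ht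
    _ = Real.exp (-(2 * b) * (t - c)) := by rw [← Real.exp_nat_mul]; ring_nf

end Spectral

section Bounds

variable {lam : ℝ}

lemma one_le_two_div_sqrt_mul_exp (hlam0 : 0 < lam) (hlam : lam ≤ 1 / 2) {d : ℝ}
    (hd : d ≤ 1) : 1 ≤ 2 / Real.sqrt lam * Real.exp (-lam * d) := by
  have hsqrt : Real.sqrt lam ≤ 1 := Real.sqrt_le_one.2 (by linarith)
  have htwo : 2 ≤ 2 / Real.sqrt lam :=
    (le_div_iff₀ (Real.sqrt_pos.2 hlam0)).2 (by linarith)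
  have hhalf : 1 / 2 ≤ Real.exp (-lam * d) :=
    calc 1 / 2 ≤ -lam + 1 := by linarith
      _ ≤ -lam * d + 1 := by nlinarith
      _ ≤ Real.exp (-lam * d) := Real.add_one_le_exp _
  nlinarith

lemma le_two_div_sqrt_mul_exp_of_sq_le (hlam0 : 0 < lam) (hlam : lam ≤ 1 / 2) {r d : ℝ}
    (hr : 0 ≤ r) (h : r ^ 2 ≤ Real.exp (-(2 * lam) * (d - 1)) / (2 * lam)) :
    r ≤ 2 / Real.sqrt lam * Real.exp (-lam * d) := by
  have hexp : Real.exp (2 * lam) ≤ 8 :=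
    calc Real.exp (2 * lam) ≤ Real.exp 1 := Real.exp_le_exp.2 (by linarith)
      _ ≤ 8 := by linarith [Real.exp_one_lt_d9]
  have hsq : (2 / Real.sqrt lam * Real.exp (-lam * d)) ^ 2 =
      4 / lam * Real.exp (-(2 * lam) * d) := by
    rw [mul_pow, div_pow, Real.sq_sqrt hlam0.le, ← Real.exp_nat_mul]
    norm_num [← mul_assoc]
  have hsplit : Real.exp (-(2 * lam) * (d - 1)) =
      Real.exp (2 * lam) * Real.exp (-(2 * lam) * d) := by
    rw [← Real.exp_add]
    ring_nf
  rw [← pow_le_pow_iff_left₀ hr (by positivity) two_ne_zero, hsq]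
  refine h.trans ?_
  rw [hsplit, div_le_iff₀ (by positivity)]
  have : 4 / lam * (2 * lam) = 8 := by field_simp; norm_num
  nlinarith [Real.exp_pos (-(2 * lam) * d)]

end Bounds

theorem norm_phi_energy_bound_general {n : ℕ} {H : Matrix (Fin n) (Fin n) ℂ} (hH : H.PosSemidef)
    (A : Matrix (Fin n) (Fin n) ℂ) (hA : ‖A‖ ≤ 1) (ε lam R : ℝ)
    (hlam0 : 0 < lam) (hlam : lam ≤ 1 / 2) (hR : 0 ≤ R)
    (hbound : ∀ ε' : ℝ, ε ≤ ε' →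
      ‖spectralProj hH.1 (Set.Ici ε') * A * spectralProj hH.1 (Set.Icc 0 ε)‖ ≤
        Real.exp (-lam * (ε' - ε - 2 * R)))
    (ψ : EuclideanSpace ℂ (Fin n)) (hψ : ‖ψ‖ = 1)
    (φ : EuclideanSpace ℂ (Fin n))
    (hφ : φ = Matrix.toEuclideanLin (A * spectralProj hH.1 (Set.Icc 0 ε)) ψ)
    (εφ : ℝ)
    (hεφ : εφ = (inner ℂ φ (Matrix.toEuclideanLin H φ) : ℂ).re / ‖φ‖ ^ 2) :
    ‖φ‖ ≤ 2 / Real.sqrt lam * Real.exp (-lam * (εφ - ε - 2 * R)) := by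
  obtain rfl | hφ0 := eq_or_ne φ 0
  · rw [norm_zero]
    positivity
  rcases le_or_gt (εφ - ε - 2 * R) 1 with hd | hd
  · refine le_trans ?_ (one_le_two_div_sqrt_mul_exp hlam0 hlam hd)
    rw [hφ]
    refine (norm_toEuclideanLin_apply_le _ ψ).trans ?_
    rw [hψ, mul_one]
    exact (l2_opNorm_mul _ _).trans
      (mul_le_one₀ hA (norm_nonneg _) (norm_spectralProj_le_one hH.1 _))
  have htail : ∀ t, εφ - 1 < t → ‖toEuclideanLin (spectralProj hH.1 (Ici t)) φ‖ ≤
      Real.exp (-lam * (t - (ε + 2 * R))) := by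
    intro t ht
    rw [hφ]
    refine (norm_toEuclideanLin_apply_apply_le _ _ ψ).trans ?_
    rw [hψ, mul_one, ← mul_assoc, ← sub_sub]
    exact hbound t (by linarith)
  have henergy := re_inner_le_of_norm_spectralProj_Ici_le hH.1 φ hlam0 htail
  have hεφ' : εφ * ‖φ‖ ^ 2 = (inner ℂ φ (toEuclideanLin H φ)).re := by
    rw [hεφ, div_mul_cancel₀ _ (by positivity)]
  refine le_two_div_sqrt_mul_exp_of_sq_le hlam0 hlam (norm_nonneg φ) ?_
  convert (by linarith :
    ‖φ‖ ^ 2 ≤ Real.exp (-(2 * lam) * (εφ - 1 - (ε + 2 * R))) / (2 * lam)) using 4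
  ring

/-- If the off-diagonal spectral weights of `A` decay as
`‖Π_{[ε',∞)} A Π_{[0,ε]}‖ ≤ e^{-lam(ε'-ε-2R)}`, then the state `φ = A Π_{[0,ε]} ψ`
with mean energy `ε_φ` satisfies `‖φ‖ ≤ (2/√lam) e^{-lam(ε_φ-ε-2R)}`. -/
theorem norm_phi_energy_bound {n : ℕ} {H : Matrix (Fin n) (Fin n) ℂ} (hH : H.PosSemidef)
    (A : Matrix (Fin n) (Fin n) ℂ) (hA : ‖A‖ ≤ 1) (ε lam R : ℝ)
    (hε : 0 ≤ ε) (hlam0 : 0 < lam) (hlam : lam ≤ 1 / 2) (hR : 0 ≤ R)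
    (hbound : ∀ ε' : ℝ, ε ≤ ε' →
      ‖spectralProj hH.1 (Set.Ici ε') * A * spectralProj hH.1 (Set.Icc 0 ε)‖ ≤
        Real.exp (-lam * (ε' - ε - 2 * R)))
    (ψ : EuclideanSpace ℂ (Fin n)) (hψ : ‖ψ‖ = 1)
    (φ : EuclideanSpace ℂ (Fin n))
    (hφ : φ = Matrix.toEuclideanLin (A * spectralProj hH.1 (Set.Icc 0 ε)) ψ)
    (hφ0 : φ ≠ 0) (εφ : ℝ)
    (hεφ : εφ = (inner ℂ φ (Matrix.toEuclideanLin H φ) : ℂ).re / ‖φ‖ ^ 2) :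
    ‖φ‖ ≤ 2 / Real.sqrt lam * Real.exp (-lam * (εφ - ε - 2 * R)) :=
  norm_phi_energy_bound_general hH A hA ε lam R hlam0 hlam hR hbound ψ hψ φ hφ εφ hεφ
end
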